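/- (Sensitivity of g, part of Claim F) Let δ = 1/2 + (1/4)·∑_{k≥0} ω_k/2^k with (ω_k) the Fibonacci word, and let C ⊂ [0,1] be the Cantor set on which every g-orbit starting in C has ω-limit set equal to C. Then for every t_0 ∈ C and every ε > 0 there exist s_0 ∈ [0,1] and k ∈ ℕ with |s_0 − t_0| ≤ ε and |g^k(s_0) − g^k(t_0)| ≥ 1/2; that is, g has sensitive dependence on initial conditions at every point of C with sensitivity constant 1/2. -/

import Mathlib

/-- The golden ratio `φ = (1 + √5)/2`. -/
noncomputable def goldenPhi : ℝ := (1 + Real.sqrt 5) / 2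

/-- The `i`-th letter of the Fibonacci word:
`ω_i = 2 + ⌊(i+1)φ⌋ − ⌊(i+2)φ⌋`. -/
noncomputable def fibWord (i : ℕ) : ℤ :=
  2 + ⌊((i : ℝ) + 1) * goldenPhi⌋ - ⌊((i : ℝ) + 2) * goldenPhi⌋

/-- `δ = 1/2 + (1/4)·∑_{k≥0} ω_k / 2^k`. -/
noncomputable def fibDelta : ℝ :=
  1 / 2 + (1 / 4) * ∑' k : ℕ, (fibWord k : ℝ) / 2 ^ k

/-- The piecewise-affine map `g : [0,1] → [0,1]`:
`g(t) = t/2 + δ` on `[0, 2(1−δ))` and `g(t) = t/2 + δ − 1` on `[2(1−δ), 1]`. -/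
noncomputable def gMap (δ : ℝ) (t : ℝ) : ℝ :=
  if t < 2 * (1 - δ) then t / 2 + δ else t / 2 + δ - 1

/-- A Cantor set: a nonempty compact set that is perfect and totally disconnected. -/
def IsCantorSet {X : Type*} [TopologicalSpace X] (C : Set X) : Prop :=
  C.Nonempty ∧ IsCompact C ∧ Perfect C ∧ IsTotallyDisconnected C

/-- The ω-limit set of `x` under `f`: all limits of subsequences of the orbit. -/
def omegaLimitSet {X : Type*} [TopologicalSpace X] (f : X → X) (x : X) : Set X :=
  {p | ∃ φ : ℕ → ℕ, StrictMono φ ∧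
    Filter.Tendsto (fun k => f^[φ k] x) Filter.atTop (nhds p)}

/-!
Landing on opposite sides of the discontinuity `2(1 − δ)` separates the next images by at least
`1/2`. So if `g` were not `1/2`-sensitive at `t₀ ∈ C`, every point `ε`-close to `t₀` would follow
the same affine branches as `t₀` forever. Since `t₀ ∈ ω(t₀)`, some `gⁿ(t₀)` is such a point, hence
`g^(k+n)(t₀) − gᵏ(t₀) = (gⁿ(t₀) − t₀)/2ᵏ`: the orbit of `t₀` is asymptotically `n`-periodic, so its
ω-limit set is finite, whereas the Cantor set `C` is infinite.
-/

open Filter Topology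

lemma one_lt_goldenPhi : 1 < goldenPhi := by
  have : (1 : ℝ) < Real.sqrt 5 := by
    rw [Real.lt_sqrt zero_le_one]; norm_num
  unfold goldenPhi; linarith

lemma goldenPhi_lt_two : goldenPhi < 2 := by
  have : Real.sqrt 5 < 3 := by
    rw [Real.sqrt_lt' three_pos]; norm_num
  unfold goldenPhi; linarith

lemma floor_add_goldenPhi_sub_floor_mem_Icc (x : ℝ) : ⌊x + goldenPhi⌋ - ⌊x⌋ ∈ Set.Icc 1 2 := by
  have hlo : ⌊x⌋ + 1 ≤ ⌊x + goldenPhi⌋ := by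
    rw [← Int.floor_add_one]; exact Int.floor_le_floor (by linarith [one_lt_goldenPhi])
  have hhi : ⌊x + goldenPhi⌋ ≤ ⌊x⌋ + 2 := by
    rw [← Int.floor_add_intCast]
    exact Int.floor_le_floor (by push_cast; linarith [goldenPhi_lt_two])
  constructor <;> omega

lemma fibWord_mem_Icc (i : ℕ) : fibWord i ∈ Set.Icc (0 : ℤ) 1 := by
  have h := floor_add_goldenPhi_sub_floor_mem_Icc (((i : ℝ) + 1) * goldenPhi)
  rw [← add_one_mul, add_assoc, one_add_one_eq_two] at h
  unfold fibWord
  constructor <;> linarith [h.1, h.2]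

lemma fibWord_div_pow_mem_Icc (k : ℕ) :
    (fibWord k : ℝ) / 2 ^ k ∈ Set.Icc 0 ((1 / 2) ^ k) := by
  obtain ⟨h₀, h₁⟩ := fibWord_mem_Icc k
  rw [one_div_pow]
  exact ⟨by positivity, div_le_div_of_nonneg_right (by exact_mod_cast h₁) (by positivity)⟩

lemma fibDelta_mem_Icc : fibDelta ∈ Set.Icc (1 / 2 : ℝ) 1 := by
  have hsum : Summable fun k : ℕ => (fibWord k : ℝ) / 2 ^ k :=
    summable_geometric_two.of_nonneg_of_le (fun k => (fibWord_div_pow_mem_Icc k).1)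
      (fun k => (fibWord_div_pow_mem_Icc k).2)
  have h₀ : 0 ≤ ∑' k : ℕ, (fibWord k : ℝ) / 2 ^ k :=
    tsum_nonneg fun k => (fibWord_div_pow_mem_Icc k).1
  have h₂ : ∑' k : ℕ, (fibWord k : ℝ) / 2 ^ k ≤ 2 :=
    (hsum.tsum_le_tsum (fun k => (fibWord_div_pow_mem_Icc k).2) summable_geometric_two).trans
      tsum_geometric_two.le
  unfold fibDelta
  constructor <;> linarith

section gMap

variable {δ : ℝ}

lemma gMap_mapsTo (h₀ : 0 ≤ δ) (h₁ : δ ≤ 1) :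
    Set.MapsTo (gMap δ) (Set.Icc 0 1) (Set.Icc 0 1) := by
  rintro t ⟨ht₀, ht₁⟩
  unfold gMap
  split_ifs with h
  · constructor <;> linarith
  · constructor <;> linarith [not_lt.mp h]

lemma gMap_sub_gMap_of_iff {x y : ℝ} (h : x < 2 * (1 - δ) ↔ y < 2 * (1 - δ)) :
    gMap δ y - gMap δ x = (y - x) / 2 := by
  unfold gMap
  split_ifs <;> first | (exfalso; tauto) | ring

lemma iterate_gMap_sub_iterate_gMap_of_iff {s s' : ℝ}
    (h : ∀ k, ((gMap δ)^[k] s < 2 * (1 - δ) ↔ (gMap δ)^[k] s' < 2 * (1 - δ))) (k : ℕ) :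
    (gMap δ)^[k] s' - (gMap δ)^[k] s = (s' - s) * (1 / 2) ^ k := by
  induction k with
  | zero => simp
  | succ k ih =>
    rw [Function.iterate_succ_apply', Function.iterate_succ_apply', gMap_sub_gMap_of_iff (h k),
      ih, pow_succ]
    ring

lemma one_half_le_abs_gMap_sub_gMap_of_not_iff {x y : ℝ} (hx : x ∈ Set.Icc (0 : ℝ) 1)
    (hy : y ∈ Set.Icc (0 : ℝ) 1) (h : ¬(x < 2 * (1 - δ) ↔ y < 2 * (1 - δ))) :
    1 / 2 ≤ |gMap δ x - gMap δ y| := by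
  obtain ⟨hx₀, hx₁⟩ := hx
  obtain ⟨hy₀, hy₁⟩ := hy
  unfold gMap
  split_ifs with h₁ h₂ h₂
  · tauto
  · rw [abs_of_nonneg (by linarith)]; linarith
  · rw [abs_of_nonpos (by linarith)]; linarith
  · tauto

end gMap

lemma exists_iterate_dist_lt_of_mem_omegaLimitSet {X : Type*} [PseudoMetricSpace X]
    {f : X → X} {x p : X} (hp : p ∈ omegaLimitSet f x) {ε : ℝ} (hε : 0 < ε) (N : ℕ) :
    ∃ n ≥ N, dist (f^[n] x) p < ε := by
  obtain ⟨φ, hφ, hlim⟩ := hp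
  obtain ⟨j, hj, hN⟩ :=
    ((hlim.eventually (Metric.ball_mem_nhds p hε)).and
      (hφ.tendsto_atTop.eventually_ge_atTop N)).exists
  exact ⟨φ j, hN, hj⟩

lemma omegaLimitSet_subset_of_tendsto_dist {X : Type*} [PseudoMetricSpace X] {f : X → X} {x : X}
    {L : ℕ → X} {F : Set X} (hF : IsClosed F) (hL : ∀ k, L k ∈ F)
    (hdist : Tendsto (fun k => dist (f^[k] x) (L k)) atTop (𝓝 0)) :
    omegaLimitSet f x ⊆ F := by
  rintro p ⟨φ, hφ, hlim⟩
  exact hF.mem_of_tendsto (hlim.congr_dist (hdist.comp hφ.tendsto_atTop))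
    (Eventually.of_forall fun j => hL (φ j))

lemma Function.Periodic.finite_range_of_pos {α : Type*} {L : ℕ → α} {n : ℕ}
    (hL : Function.Periodic L n) (hn : 0 < n) : (Set.range L).Finite := by
  refine ((Set.finite_Iio n).image L).subset ?_
  rintro _ ⟨k, rfl⟩
  exact ⟨k % n, Nat.mod_lt k hn, hL.map_mod_nat k⟩

lemma omegaLimitSet_finite_of_iterate_add_eq {f : ℝ → ℝ} {x a r : ℝ} {n : ℕ} (hn : 0 < n)
    (hr : |r| < 1) (h : ∀ k, f^[k + n] x = f^[k] x + a * r ^ k) :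
    (omegaLimitSet f x).Finite := by
  have hrn : 1 - r ^ n ≠ 0 := by
    refine sub_ne_zero.mpr (ne_of_gt ?_)
    exact (le_abs_self _).trans_lt (by rw [abs_pow]; exact pow_lt_one₀ (abs_nonneg r) hr hn.ne')
  -- `L k` is the limit of `f^[k + m * n] x` as `m → ∞`.
  set L : ℕ → ℝ := fun k => f^[k] x + a / (1 - r ^ n) * r ^ k
  have hL : Function.Periodic L n := fun k => by
    simp only [L, h, pow_add]
    field_simp
    ring
  have hdist : Tendsto (fun k => dist (f^[k] x) (L k)) atTop (𝓝 0) := by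
    have := ((tendsto_pow_atTop_nhds_zero_of_abs_lt_one hr).const_mul (a / (1 - r ^ n))).abs
    simpa [L, Real.dist_eq, abs_mul, abs_div] using this
  have hfinite := hL.finite_range_of_pos hn
  exact hfinite.subset
    (omegaLimitSet_subset_of_tendsto_dist hfinite.isClosed Set.mem_range_self hdist)

/-- Sensitivity of `g` (part of Claim F): with `δ` built from the Fibonacci word, if
`C ⊆ [0,1]` is a Cantor set such that every `g`-orbit starting in `C` has ω-limit set
equal to `C`, then `g` has sensitive dependence on initial conditions at every point of
`C` with sensitivity constant `1/2`: for all `t₀ ∈ C` and `ε > 0` there exist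
`s₀ ∈ [0,1]` and `k ∈ ℕ` with `|s₀ − t₀| ≤ ε` and `|g^k(s₀) − g^k(t₀)| ≥ 1/2`. -/
theorem gMap_sensitive (C : Set ℝ) (hCsub : C ⊆ Set.Icc (0 : ℝ) 1)
    (hCantor : IsCantorSet C)
    (homega : ∀ t₀ ∈ C, omegaLimitSet (gMap fibDelta) t₀ = C) :
    ∀ t₀ ∈ C, ∀ ε > (0 : ℝ), ∃ s₀ ∈ Set.Icc (0 : ℝ) 1, ∃ k : ℕ,
      |s₀ - t₀| ≤ ε ∧
      1 / 2 ≤ |(gMap fibDelta)^[k] s₀ - (gMap fibDelta)^[k] t₀| := by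
  intro t₀ ht₀ ε hε
  by_contra! hclose
  have hI : Set.MapsTo (gMap fibDelta) (Set.Icc 0 1) (Set.Icc 0 1) :=
    gMap_mapsTo (by linarith [fibDelta_mem_Icc.1]) fibDelta_mem_Icc.2
  have hbranch : ∀ s ∈ Set.Icc (0 : ℝ) 1, |s - t₀| ≤ ε → ∀ k,
      ((gMap fibDelta)^[k] t₀ < 2 * (1 - fibDelta) ↔
        (gMap fibDelta)^[k] s < 2 * (1 - fibDelta)) := by
    intro s hs hst k
    by_contra hk
    have hfar := hclose s hs (k + 1) hst
    rw [Function.iterate_succ_apply', Function.iterate_succ_apply'] at hfar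
    exact hfar.not_ge <| one_half_le_abs_gMap_sub_gMap_of_not_iff ((hI.iterate k) hs)
      ((hI.iterate k) (hCsub ht₀)) (fun h => hk h.symm)
  obtain ⟨n, hn, hnε⟩ :=
    exists_iterate_dist_lt_of_mem_omegaLimitSet ((homega t₀ ht₀).symm ▸ ht₀) hε 1
  have hper : ∀ k, (gMap fibDelta)^[k + n] t₀ =
      (gMap fibDelta)^[k] t₀ + ((gMap fibDelta)^[n] t₀ - t₀) * (1 / 2) ^ k := fun k => by
    rw [Function.iterate_add_apply, ← iterate_gMap_sub_iterate_gMap_of_iff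
      (hbranch _ ((hI.iterate n) (hCsub ht₀)) (Real.dist_eq _ _ ▸ hnε.le)) k]
    ring
  have hfinite := omegaLimitSet_finite_of_iterate_add_eq hn (by norm_num) hper
  rw [homega t₀ ht₀] at hfinite
  exact Set.Infinite.of_accPt (hCantor.2.2.1.acc _ ht₀) hfinite
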